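/- Let w1, w2 be even integers ≥ 2. A polynomial P ∈ V_{w1,w2}^ℚ satisfies (1,(1+S))·P = 0, (1,(1+U+U²))·P = 0 and ((1−US),1)·P = 0 if and only if P is of the form P(X1,X2) = X1^{w1}·P2(X2) for some P2 ∈ W_{w2}^ℚ. -/
import Mathlib


open MvPolynomial

/-- `SL(2, ℤ)`. -/
abbrev SL2Z := Matrix.SpecialLinearGroup (Fin 2) ℤ

/-- `S = [[0,-1],[1,0]]`. -/
def matS : SL2Z := ⟨!![0, -1; 1, 0], by norm_num [Matrix.det_fin_two_of]⟩

/-- `U = [[0,1],[-1,1]]`. -/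
def matU : SL2Z := ⟨!![0, 1; -1, 1], by norm_num [Matrix.det_fin_two_of]⟩

/-- `T = [[1,1],[0,1]]`. -/
def matT : SL2Z := ⟨!![1, 1; 0, 1], by norm_num [Matrix.det_fin_two_of]⟩

/-- The weight-`w` action of `γ = [[a,b],[c,d]] ∈ SL(2,ℤ)` on a one-variable polynomial of
degree ≤ w : `(γ·Q)(X) = (-cX+a)^w Q((dX-b)/(-cX+a))`, written coefficientwise. -/
noncomputable def polyAct1 {R : Type*} [CommRing R] (w : ℕ) (γ : SL2Z) (Q : Polynomial R) :
    Polynomial R :=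
  ∑ m ∈ Finset.range (w + 1),
    Polynomial.C (Q.coeff m) *
      (Polynomial.C ((γ.1 1 1 : ℤ) : R) * Polynomial.X - Polynomial.C ((γ.1 0 1 : ℤ) : R)) ^ m *
      (Polynomial.C (-((γ.1 1 0 : ℤ) : R)) * Polynomial.X + Polynomial.C ((γ.1 0 0 : ℤ) : R)) ^
        (w - m)

/-- `((dX-b)^m) * ((-cX+a)^n)` for `γ = [[a,b],[c,d]]`, in the variable `x`. -/
noncomputable def mfrac {R : Type*} [CommRing R] (γ : SL2Z) (x : MvPolynomial (Fin 2) R)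
    (m n : ℕ) : MvPolynomial (Fin 2) R :=
  (MvPolynomial.C ((γ.1 1 1 : ℤ) : R) * x - MvPolynomial.C ((γ.1 0 1 : ℤ) : R)) ^ m *
    (MvPolynomial.C (-((γ.1 1 0 : ℤ) : R)) * x + MvPolynomial.C ((γ.1 0 0 : ℤ) : R)) ^ n

/-- The action of a pair `(γ1, γ2) ∈ SL(2,ℤ)²` on polynomials in `X1 = X 0`, `X2 = X 1` of
degree ≤ w1 in `X1` and ≤ w2 in `X2`: the weight-`w1` action on `X1` via `γ1` and the
weight-`w2` action on `X2` via `γ2`. -/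
noncomputable def polyAct2 {R : Type*} [CommRing R] (w1 w2 : ℕ) (γ1 γ2 : SL2Z)
    (P : MvPolynomial (Fin 2) R) : MvPolynomial (Fin 2) R :=
  ∑ m1 ∈ Finset.range (w1 + 1), ∑ m2 ∈ Finset.range (w2 + 1),
    MvPolynomial.C (MvPolynomial.coeff (Finsupp.single 0 m1 + Finsupp.single 1 m2) P) *
      mfrac γ1 (MvPolynomial.X 0) m1 (w1 - m1) * mfrac γ2 (MvPolynomial.X 1) m2 (w2 - m2)

/-- Membership in `V_w^ℚ` : degree at most `w`. -/
def MemV1 (w : ℕ) (P : Polynomial ℚ) : Prop := P.natDegree ≤ w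

/-- Membership in `W_w^ℚ = {P ∈ V_w^ℚ : (1+S)·P = 0, (1+U+U²)·P = 0}`. -/
def MemW1 (w : ℕ) (P : Polynomial ℚ) : Prop :=
  MemV1 w P ∧ P + polyAct1 w matS P = 0 ∧
    P + polyAct1 w matU P + polyAct1 w (matU ^ 2) P = 0

/-- Membership in `V_{w1,w2}^ℚ` : degree ≤ w1 in `X1 = X 0` and ≤ w2 in `X2 = X 1`. -/
def MemV2 (w1 w2 : ℕ) (P : MvPolynomial (Fin 2) ℚ) : Prop :=
  MvPolynomial.degreeOf 0 P ≤ w1 ∧ MvPolynomial.degreeOf 1 P ≤ w2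

/-- The embedding `P1(X) ↦ P1(X1)` of one-variable polynomials in the variable `X1 = X 0`. -/
noncomputable def toX1 (P1 : Polynomial ℚ) : MvPolynomial (Fin 2) ℚ :=
  Polynomial.aeval (MvPolynomial.X 0 : MvPolynomial (Fin 2) ℚ) P1


/-- The embedding `P2(X) ↦ P2(X2)` of one-variable polynomials in the variable `X2 = X 1`. -/
noncomputable def toX2 (P2 : Polynomial ℚ) : MvPolynomial (Fin 2) ℚ :=
  Polynomial.aeval (MvPolynomial.X 1 : MvPolynomial (Fin 2) ℚ) P2

/- AUX START -/
section Aux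

open Polynomial in
/-- One-variable version of `mfrac`. -/
noncomputable def mfrac1 (γ : SL2Z) (m n : ℕ) : Polynomial ℚ :=
  (Polynomial.C ((γ.1 1 1 : ℤ) : ℚ) * Polynomial.X - Polynomial.C ((γ.1 0 1 : ℤ) : ℚ)) ^ m *
  (Polynomial.C (-((γ.1 1 0 : ℤ) : ℚ)) * Polynomial.X + Polynomial.C ((γ.1 0 0 : ℤ) : ℚ)) ^ n

lemma toX1_mfrac1 (γ : SL2Z) (m n : ℕ) :
    toX1 (mfrac1 γ m n) = mfrac γ (MvPolynomial.X 0) m n := by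
  simp [toX1, mfrac1, mfrac, MvPolynomial.algebraMap_eq]

lemma toX2_mfrac1 (γ : SL2Z) (m n : ℕ) :
    toX2 (mfrac1 γ m n) = mfrac γ (MvPolynomial.X 1) m n := by
  simp [toX2, mfrac1, mfrac, MvPolynomial.algebraMap_eq]

lemma toX1_C (r : ℚ) : toX1 (Polynomial.C r) = MvPolynomial.C r := by
  simp [toX1, MvPolynomial.algebraMap_eq]

lemma toX1_mul (p q : Polynomial ℚ) : toX1 (p * q) = toX1 p * toX1 q := map_mul _ p q

lemma toX1_Xpow (k : ℕ) : toX1 (Polynomial.X ^ k) = MvPolynomial.X 0 ^ k := by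
  simp [toX1]

lemma mfrac1_one (m n : ℕ) : mfrac1 1 m n = Polynomial.X ^ m := by
  have h00 : ((1 : SL2Z).1) 0 0 = 1 := by decide
  have h01 : ((1 : SL2Z).1) 0 1 = 0 := by decide
  have h10 : ((1 : SL2Z).1) 1 0 = 0 := by decide
  have h11 : ((1 : SL2Z).1) 1 1 = 1 := by decide
  simp [mfrac1, h00, h01, h10, h11]

lemma mfrac1_US (m n : ℕ) :
    mfrac1 (matU * matS) m n = (1 - Polynomial.X) ^ n * Polynomial.X ^ m := by
  have h00 : ((matU * matS).1) 0 0 = 1 := by decide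
  have h01 : ((matU * matS).1) 0 1 = 0 := by decide
  have h10 : ((matU * matS).1) 1 0 = 1 := by decide
  have h11 : ((matU * matS).1) 1 1 = 1 := by decide
  simp only [mfrac1, h00, h01, h10, h11, Int.cast_one, Int.cast_zero, Int.cast_neg,
    Polynomial.C_1, Polynomial.C_0, map_neg]
  ring

lemma pair_eq_iff (k l a b : ℕ) :
    (Finsupp.single (0:Fin 2) k + Finsupp.single 1 l = Finsupp.single 0 a + Finsupp.single 1 b)
      ↔ (k = a ∧ l = b) := by
  constructor
  · intro h
    refine ⟨?_, ?_⟩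
    · have := DFunLike.congr_fun h 0; simpa [Finsupp.single_apply] using this
    · have := DFunLike.congr_fun h 1; simpa [Finsupp.single_apply] using this
  · rintro ⟨rfl, rfl⟩; rfl

lemma pair_fst (a b : ℕ) :
    ((Finsupp.single (0:Fin 2) a + Finsupp.single 1 b : Fin 2 →₀ ℕ)) 0 = a := by
  simp [Finsupp.single_apply]

lemma pair_snd (a b : ℕ) :
    ((Finsupp.single (0:Fin 2) a + Finsupp.single 1 b : Fin 2 →₀ ℕ)) 1 = b := by
  simp [Finsupp.single_apply]

lemma eq_pair (d : Fin 2 →₀ ℕ) : d = Finsupp.single 0 (d 0) + Finsupp.single 1 (d 1) := by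
  ext i; fin_cases i <;> simp [Finsupp.single_apply]

lemma coeff_pair_mul (a b : ℕ) (p q : Polynomial ℚ) :
    MvPolynomial.coeff (Finsupp.single 0 a + Finsupp.single 1 b) (toX1 p * toX2 q) =
      p.coeff a * q.coeff b := by
  induction p using Polynomial.induction_on' with
  | add f g hf hg =>
      simp only [toX1, map_add, add_mul, MvPolynomial.coeff_add, Polynomial.coeff_add, add_mul]
      rw [← hf, ← hg]; rfl
  | monomial k u =>
      induction q using Polynomial.induction_on' with
      | add f g hf hg =>
          simp only [toX2, map_add, mul_add, MvPolynomial.coeff_add, Polynomial.coeff_add,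
            mul_add]
          rw [← hf, ← hg]; rfl
      | monomial l v =>
          rw [toX1, toX2, Polynomial.aeval_monomial, Polynomial.aeval_monomial]
          have : (algebraMap ℚ (MvPolynomial (Fin 2) ℚ)) u * MvPolynomial.X 0 ^ k *
              ((algebraMap ℚ (MvPolynomial (Fin 2) ℚ)) v * MvPolynomial.X 1 ^ l) =
              MvPolynomial.monomial (Finsupp.single 0 k + Finsupp.single 1 l) (u * v) := by
            simp only [MvPolynomial.algebraMap_eq, MvPolynomial.X_pow_eq_monomial]
            rw [MvPolynomial.C_mul_monomial, MvPolynomial.C_mul_monomial,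
              MvPolynomial.monomial_mul]
            ring_nf
          rw [this, MvPolynomial.coeff_monomial, Polynomial.coeff_monomial,
            Polynomial.coeff_monomial]
          by_cases h : k = a ∧ l = b
          · obtain ⟨rfl, rfl⟩ := h; simp
          · rw [if_neg (by rw [pair_eq_iff]; exact h)]
            rcases not_and_or.mp h with h1 | h1 <;> simp [h1]

/-- master coefficient formula for `polyAct2`. -/
lemma coeff_polyAct2 (w1 w2 : ℕ) (γ1 γ2 : SL2Z) (P : MvPolynomial (Fin 2) ℚ) (a b : ℕ) :
    MvPolynomial.coeff (Finsupp.single 0 a + Finsupp.single 1 b) (polyAct2 w1 w2 γ1 γ2 P) =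
    ∑ m1 ∈ Finset.range (w1 + 1), ∑ m2 ∈ Finset.range (w2 + 1),
      MvPolynomial.coeff (Finsupp.single 0 m1 + Finsupp.single 1 m2) P *
        ((mfrac1 γ1 m1 (w1 - m1)).coeff a * (mfrac1 γ2 m2 (w2 - m2)).coeff b) := by
  rw [polyAct2, MvPolynomial.coeff_sum]
  refine Finset.sum_congr rfl fun m1 _ => ?_
  rw [MvPolynomial.coeff_sum]
  refine Finset.sum_congr rfl fun m2 _ => ?_
  rw [← toX1_mfrac1, ← toX2_mfrac1, ← toX1_C, ← toX1_mul, coeff_pair_mul,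
    Polynomial.coeff_C_mul, mul_assoc]

lemma coeff_polyAct1 (w : ℕ) (γ : SL2Z) (Q : Polynomial ℚ) (b : ℕ) :
    (polyAct1 w γ Q).coeff b =
      ∑ m ∈ Finset.range (w + 1), Q.coeff m * (mfrac1 γ m (w - m)).coeff b := by
  simp only [mfrac1]
  rw [polyAct1, Polynomial.finset_sum_coeff]
  refine Finset.sum_congr rfl fun m _ => ?_
  rw [mul_assoc, Polynomial.coeff_C_mul]

/-- slice formula when `γ1 = 1`, for `a ≤ w1`. -/
lemma coeff_polyAct2_one_left (w1 w2 : ℕ) (γ : SL2Z) (P : MvPolynomial (Fin 2) ℚ) (a b : ℕ)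
    (ha : a ≤ w1) :
    MvPolynomial.coeff (Finsupp.single 0 a + Finsupp.single 1 b) (polyAct2 w1 w2 1 γ P) =
    ∑ m2 ∈ Finset.range (w2 + 1),
      MvPolynomial.coeff (Finsupp.single 0 a + Finsupp.single 1 m2) P *
        (mfrac1 γ m2 (w2 - m2)).coeff b := by
  rw [coeff_polyAct2, Finset.sum_comm]
  refine Finset.sum_congr rfl fun m2 _ => ?_
  have key : ∀ m1 ∈ Finset.range (w1 + 1),
      MvPolynomial.coeff (Finsupp.single 0 m1 + Finsupp.single 1 m2) P *
        ((mfrac1 1 m1 (w1 - m1)).coeff a * (mfrac1 γ m2 (w2 - m2)).coeff b) =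
      if m1 = a then MvPolynomial.coeff (Finsupp.single 0 m1 + Finsupp.single 1 m2) P *
        (mfrac1 γ m2 (w2 - m2)).coeff b else 0 := by
    intro m1 _
    rw [mfrac1_one, Polynomial.coeff_X_pow]
    by_cases h : a = m1
    · subst h; simp
    · rw [if_neg h, if_neg fun h' => h h'.symm]; ring
  rw [Finset.sum_congr rfl key, Finset.sum_ite_eq' (Finset.range (w1 + 1)) a,
    if_pos (Finset.mem_range.mpr (Nat.lt_succ_of_le ha))]

/-- vanishing when `γ1 = 1` and `a > w1`. -/
lemma coeff_polyAct2_one_left_zero (w1 w2 : ℕ) (γ : SL2Z) (P : MvPolynomial (Fin 2) ℚ)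
    (a b : ℕ) (ha : w1 < a) :
    MvPolynomial.coeff (Finsupp.single 0 a + Finsupp.single 1 b) (polyAct2 w1 w2 1 γ P) = 0 := by
  rw [coeff_polyAct2]
  refine Finset.sum_eq_zero fun m1 hm1 => Finset.sum_eq_zero fun m2 _ => ?_
  rw [mfrac1_one, Polynomial.coeff_X_pow,
    if_neg (by have := Finset.mem_range.mp hm1; omega)]
  ring

/-- slice formula when `γ2 = 1`, for `b ≤ w2`. -/
lemma coeff_polyAct2_one_right (w1 w2 : ℕ) (γ : SL2Z) (P : MvPolynomial (Fin 2) ℚ) (a b : ℕ)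
    (hb : b ≤ w2) :
    MvPolynomial.coeff (Finsupp.single 0 a + Finsupp.single 1 b) (polyAct2 w1 w2 γ 1 P) =
    ∑ m1 ∈ Finset.range (w1 + 1),
      MvPolynomial.coeff (Finsupp.single 0 m1 + Finsupp.single 1 b) P *
        (mfrac1 γ m1 (w1 - m1)).coeff a := by
  rw [coeff_polyAct2]
  refine Finset.sum_congr rfl fun m1 _ => ?_
  have key : ∀ m2 ∈ Finset.range (w2 + 1),
      MvPolynomial.coeff (Finsupp.single 0 m1 + Finsupp.single 1 m2) P *
        ((mfrac1 γ m1 (w1 - m1)).coeff a * (mfrac1 1 m2 (w2 - m2)).coeff b) =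
      if m2 = b then MvPolynomial.coeff (Finsupp.single 0 m1 + Finsupp.single 1 m2) P *
        (mfrac1 γ m1 (w1 - m1)).coeff a else 0 := by
    intro m2 _
    rw [mfrac1_one, Polynomial.coeff_X_pow]
    by_cases h : b = m2
    · subst h; simp
    · rw [if_neg h, if_neg fun h' => h h'.symm]; ring
  rw [Finset.sum_congr rfl key, Finset.sum_ite_eq' (Finset.range (w2 + 1)) b,
    if_pos (Finset.mem_range.mpr (Nat.lt_succ_of_le hb))]

/-- vanishing when `γ2 = 1` and `b > w2`. -/
lemma coeff_polyAct2_one_right_zero (w1 w2 : ℕ) (γ : SL2Z) (P : MvPolynomial (Fin 2) ℚ)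
    (a b : ℕ) (hb : w2 < b) :
    MvPolynomial.coeff (Finsupp.single 0 a + Finsupp.single 1 b) (polyAct2 w1 w2 γ 1 P) = 0 := by
  rw [coeff_polyAct2]
  refine Finset.sum_eq_zero fun m1 _ => Finset.sum_eq_zero fun m2 hm2 => ?_
  rw [mfrac1_one, Polynomial.coeff_X_pow,
    if_neg (by have := Finset.mem_range.mp hm2; omega)]
  ring

lemma coeff_vanish_left {w1 : ℕ} {P : MvPolynomial (Fin 2) ℚ}
    (h : MvPolynomial.degreeOf 0 P ≤ w1) {a : ℕ} (b : ℕ) (ha : w1 < a) :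
    MvPolynomial.coeff (Finsupp.single 0 a + Finsupp.single 1 b) P = 0 := by
  by_contra hne
  have hmem := MvPolynomial.mem_support_iff.mpr hne
  have hlt : MvPolynomial.degreeOf 0 P < a := lt_of_le_of_lt h ha
  have := (MvPolynomial.degreeOf_lt_iff (lt_of_le_of_lt (Nat.zero_le w1) ha)).mp hlt _ hmem
  rw [pair_fst] at this
  exact lt_irrefl _ this

lemma coeff_vanish_right {w2 : ℕ} {P : MvPolynomial (Fin 2) ℚ}
    (h : MvPolynomial.degreeOf 1 P ≤ w2) (a : ℕ) {b : ℕ} (hb : w2 < b) :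
    MvPolynomial.coeff (Finsupp.single 0 a + Finsupp.single 1 b) P = 0 := by
  by_contra hne
  have hmem := MvPolynomial.mem_support_iff.mpr hne
  have hlt : MvPolynomial.degreeOf 1 P < b := lt_of_le_of_lt h hb
  have := (MvPolynomial.degreeOf_lt_iff (lt_of_le_of_lt (Nat.zero_le w2) hb)).mp hlt _ hmem
  rw [pair_snd] at this
  exact lt_irrefl _ this

lemma coeff_one_sub_X_pow_zero (n : ℕ) : ((1 - Polynomial.X : Polynomial ℚ) ^ n).coeff 0 = 1 := by
  induction n with
  | zero => simp
  | succ n ih => rw [pow_succ, Polynomial.mul_coeff_zero, ih]; simp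

lemma coeff_one_sub_X_pow_one (n : ℕ) :
    ((1 - Polynomial.X : Polynomial ℚ) ^ n).coeff 1 = -(n : ℚ) := by
  induction n with
  | zero => simp [Polynomial.coeff_one]
  | succ n ih =>
      rw [pow_succ, mul_sub, mul_one, Polynomial.coeff_sub, ih]
      have : ((1 - Polynomial.X : Polynomial ℚ) ^ n * Polynomial.X).coeff 1 =
          ((1 - Polynomial.X : Polynomial ℚ) ^ n).coeff 0 := Polynomial.coeff_mul_X _ 0
      rw [this, coeff_one_sub_X_pow_zero]
      push_cast; ring

end Aux
/- AUX END -/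

/-- A polynomial `P ∈ V_{w1,w2}^ℚ` is killed by `(1,(1+S))`, `(1,(1+U+U²))` and `((1-US),1)`
iff it equals `X1^{w1}·P2(X2)` for some `P2 ∈ W_{w2}^ℚ`. -/
theorem annihilator_IV_eq_Xw_otimes_W (w1 w2 : ℕ) (hw1 : Even w1) (hw2 : Even w2)
    (hw1' : 2 ≤ w1) (hw2' : 2 ≤ w2) (P : MvPolynomial (Fin 2) ℚ) (hP : MemV2 w1 w2 P) :
    (P + polyAct2 w1 w2 1 matS P = 0 ∧
     P + polyAct2 w1 w2 1 matU P + polyAct2 w1 w2 1 (matU ^ 2) P = 0 ∧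
     P - polyAct2 w1 w2 (matU * matS) 1 P = 0) ↔
    ∃ P2 : Polynomial ℚ, MemW1 w2 P2 ∧ P = MvPolynomial.X 0 ^ w1 * toX2 P2 := by
  obtain ⟨hd1, hd2⟩ := hP
  constructor
  · rintro ⟨h1, h2, h3⟩
    -- Step 1: coefficients with first index < w1 vanish
    have key : ∀ k, k < w1 → ∀ b,
        MvPolynomial.coeff (Finsupp.single 0 k + Finsupp.single 1 b) P = 0 := by
      intro k
      induction k using Nat.strong_induction_on with
      | _ k IH =>
        intro hk b
        by_cases hb : b ≤ w2
        · have hPeq : P = polyAct2 w1 w2 (matU * matS) 1 P := sub_eq_zero.mp h3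
          have heq := congrArg
            (MvPolynomial.coeff (Finsupp.single 0 (k+1) + Finsupp.single 1 b)) hPeq
          rw [coeff_polyAct2_one_right w1 w2 (matU * matS) P (k+1) b hb] at heq
          have hsub : ({k, k+1} : Finset ℕ) ⊆ Finset.range (w1 + 1) := by
            intro x hx
            simp only [Finset.mem_insert, Finset.mem_singleton] at hx
            rcases hx with rfl | rfl <;> exact Finset.mem_range.mpr (by omega)
          have hvan : ∀ x ∈ Finset.range (w1 + 1), x ∉ ({k, k+1} : Finset ℕ) →
              MvPolynomial.coeff (Finsupp.single 0 x + Finsupp.single 1 b) P *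
                (mfrac1 (matU * matS) x (w1 - x)).coeff (k+1) = 0 := by
            intro m1 hm1 hnot
            simp only [Finset.mem_insert, Finset.mem_singleton, not_or] at hnot
            rcases Nat.lt_or_ge m1 k with hlt | hge
            · rw [IH m1 hlt (by omega) b, zero_mul]
            · have hgt : k + 1 < m1 := by omega
              rw [mfrac1_US, Polynomial.coeff_mul_X_pow', if_neg (by omega), mul_zero]
          have hsum : (∑ m1 ∈ Finset.range (w1+1),
              MvPolynomial.coeff (Finsupp.single 0 m1 + Finsupp.single 1 b) P *
                (mfrac1 (matU * matS) m1 (w1 - m1)).coeff (k+1)) =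
              MvPolynomial.coeff (Finsupp.single 0 k + Finsupp.single 1 b) P *
                (mfrac1 (matU * matS) k (w1 - k)).coeff (k+1) +
              MvPolynomial.coeff (Finsupp.single 0 (k+1) + Finsupp.single 1 b) P *
                (mfrac1 (matU * matS) (k+1) (w1 - (k+1))).coeff (k+1) := by
            rw [← Finset.sum_subset hsub hvan, Finset.sum_pair (show k ≠ k+1 by omega)]
          have hck : (mfrac1 (matU * matS) k (w1 - k)).coeff (k+1) = -((w1 - k : ℕ) : ℚ) := by
            rw [mfrac1_US, Polynomial.coeff_mul_X_pow', if_pos (by omega),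
              show k + 1 - k = 1 by omega, coeff_one_sub_X_pow_one]
          have hck1 : (mfrac1 (matU * matS) (k+1) (w1 - (k+1))).coeff (k+1) = 1 := by
            rw [mfrac1_US, Polynomial.coeff_mul_X_pow', if_pos (by omega),
              Nat.sub_self, coeff_one_sub_X_pow_zero]
          rw [hsum, hck, hck1, mul_one, mul_neg] at heq
          have hz : MvPolynomial.coeff (Finsupp.single 0 k + Finsupp.single 1 b) P *
              ((w1 - k : ℕ) : ℚ) = 0 := by linarith
          have hne : ((w1 - k : ℕ) : ℚ) ≠ 0 := Nat.cast_ne_zero.mpr (by omega)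
          exact (mul_eq_zero.mp hz).resolve_right hne
        · exact coeff_vanish_right hd2 k (by omega)
    -- Step 2: define P2 and prove its properties
    set P2 : Polynomial ℚ := ∑ m2 ∈ Finset.range (w2 + 1),
      Polynomial.monomial m2
        (MvPolynomial.coeff (Finsupp.single 0 w1 + Finsupp.single 1 m2) P) with hP2def
    have hP2coeff : ∀ m, P2.coeff m =
        MvPolynomial.coeff (Finsupp.single 0 w1 + Finsupp.single 1 m) P := by
      intro m
      rw [hP2def, Polynomial.finset_sum_coeff]
      simp only [Polynomial.coeff_monomial]
      rw [Finset.sum_ite_eq' (Finset.range (w2+1)) m]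
      by_cases hm : m ≤ w2
      · rw [if_pos (Finset.mem_range.mpr (by omega))]
      · rw [if_neg (fun hmem => absurd (Finset.mem_range.mp hmem) (by omega)),
          coeff_vanish_right hd2 w1 (by omega)]
    have hdeg' : P2.natDegree ≤ w2 := by
      refine Polynomial.natDegree_le_iff_coeff_eq_zero.mpr fun m hm => ?_
      rw [hP2coeff]; exact coeff_vanish_right hd2 w1 hm
    have hact : ∀ (γ : SL2Z) (b : ℕ),
        MvPolynomial.coeff (Finsupp.single 0 w1 + Finsupp.single 1 b)
          (polyAct2 w1 w2 1 γ P) = (polyAct1 w2 γ P2).coeff b := by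
      intro γ b
      rw [coeff_polyAct2_one_left w1 w2 γ P w1 b le_rfl, coeff_polyAct1]
      exact Finset.sum_congr rfl fun m2 _ => by rw [hP2coeff]
    have hWS : P2 + polyAct1 w2 matS P2 = 0 := by
      apply Polynomial.ext; intro b
      rw [Polynomial.coeff_add, Polynomial.coeff_zero]
      have h := congrArg (MvPolynomial.coeff (Finsupp.single 0 w1 + Finsupp.single 1 b)) h1
      rw [MvPolynomial.coeff_add, MvPolynomial.coeff_zero, hact matS b] at h
      rw [hP2coeff]
      exact h
    have hWU : P2 + polyAct1 w2 matU P2 + polyAct1 w2 (matU ^ 2) P2 = 0 := by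
      apply Polynomial.ext; intro b
      rw [Polynomial.coeff_add, Polynomial.coeff_add, Polynomial.coeff_zero]
      have h := congrArg (MvPolynomial.coeff (Finsupp.single 0 w1 + Finsupp.single 1 b)) h2
      rw [MvPolynomial.coeff_add, MvPolynomial.coeff_add, MvPolynomial.coeff_zero,
        hact matU b, hact (matU ^ 2) b] at h
      rw [hP2coeff]
      exact h
    refine ⟨P2, ⟨hdeg', hWS, hWU⟩, ?_⟩
    apply MvPolynomial.ext; intro d
    rw [eq_pair d]
    rw [show (MvPolynomial.X 0 ^ w1 * toX2 P2 : MvPolynomial (Fin 2) ℚ) =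
      toX1 (Polynomial.X ^ w1) * toX2 P2 by rw [toX1_Xpow]]
    rw [coeff_pair_mul, Polynomial.coeff_X_pow]
    by_cases h : d 0 = w1
    · rw [if_pos h, one_mul, hP2coeff, h]
    · rw [if_neg h, zero_mul]
      rcases Nat.lt_or_ge (d 0) w1 with hlt | hge
      · exact key _ hlt _
      · exact coeff_vanish_left hd1 _ (by omega)
  · rintro ⟨P2, hmem, rfl⟩
    obtain ⟨hdeg, hWS, hWU⟩ := hmem
    have hdeg' : P2.natDegree ≤ w2 := hdeg
    have hcP : ∀ a b : ℕ,
        MvPolynomial.coeff (Finsupp.single 0 a + Finsupp.single 1 b)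
          (MvPolynomial.X 0 ^ w1 * toX2 P2 : MvPolynomial (Fin 2) ℚ) =
        (if a = w1 then 1 else 0) * P2.coeff b := by
      intro a b
      rw [show (MvPolynomial.X 0 ^ w1 * toX2 P2 : MvPolynomial (Fin 2) ℚ) =
        toX1 (Polynomial.X ^ w1) * toX2 P2 by rw [toX1_Xpow]]
      rw [coeff_pair_mul, Polynomial.coeff_X_pow]
    have hone : ∀ (γ : SL2Z) (Q : Polynomial ℚ) (a b : ℕ), a ≤ w1 → a = w1 →
        MvPolynomial.coeff (Finsupp.single 0 a + Finsupp.single 1 b)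
          (polyAct2 w1 w2 1 γ (MvPolynomial.X 0 ^ w1 * toX2 P2)) =
        (polyAct1 w2 γ P2).coeff b := by
      intro γ Q a b hle h
      rw [coeff_polyAct2_one_left w1 w2 γ _ a b hle, coeff_polyAct1]
      refine Finset.sum_congr rfl fun m2 _ => ?_
      rw [hcP, if_pos h, one_mul]
    have hzero : ∀ (γ : SL2Z) (a b : ℕ), a ≤ w1 → a ≠ w1 →
        MvPolynomial.coeff (Finsupp.single 0 a + Finsupp.single 1 b)
          (polyAct2 w1 w2 1 γ (MvPolynomial.X 0 ^ w1 * toX2 P2)) = 0 := by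
      intro γ a b hle h
      rw [coeff_polyAct2_one_left w1 w2 γ _ a b hle]
      refine Finset.sum_eq_zero fun m2 _ => ?_
      rw [hcP, if_neg h, zero_mul, zero_mul]
    refine ⟨?_, ?_, ?_⟩
    · apply MvPolynomial.ext; intro d
      rw [eq_pair d, MvPolynomial.coeff_add, MvPolynomial.coeff_zero, hcP]
      rcases Nat.lt_or_ge w1 (d 0) with hgt | hle
      · rw [coeff_polyAct2_one_left_zero w1 w2 matS _ _ _ hgt, if_neg (by omega), zero_mul,
          add_zero]
      · by_cases h : d 0 = w1
        · rw [hone matS P2 _ _ hle h, if_pos h, one_mul]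
          have h' := congrArg (fun q => Polynomial.coeff q (d 1)) hWS
          simpa using h'
        · rw [hzero matS _ _ hle h, if_neg h, zero_mul, add_zero]
    · apply MvPolynomial.ext; intro d
      rw [eq_pair d, MvPolynomial.coeff_add, MvPolynomial.coeff_add, MvPolynomial.coeff_zero,
        hcP]
      rcases Nat.lt_or_ge w1 (d 0) with hgt | hle
      · rw [coeff_polyAct2_one_left_zero w1 w2 matU _ _ _ hgt,
          coeff_polyAct2_one_left_zero w1 w2 (matU ^ 2) _ _ _ hgt, if_neg (by omega), zero_mul,
          add_zero, add_zero]
      · by_cases h : d 0 = w1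
        · rw [hone matU P2 _ _ hle h, hone (matU ^ 2) P2 _ _ hle h, if_pos h, one_mul]
          have h' := congrArg (fun q => Polynomial.coeff q (d 1)) hWU
          simpa using h'
        · rw [hzero matU _ _ hle h, hzero (matU ^ 2) _ _ hle h, if_neg h, zero_mul, add_zero,
            add_zero]
    · apply MvPolynomial.ext; intro d
      rw [eq_pair d, MvPolynomial.coeff_sub, MvPolynomial.coeff_zero, hcP]
      rcases Nat.lt_or_ge w2 (d 1) with hgt | hle
      · rw [coeff_polyAct2_one_right_zero w1 w2 (matU * matS) _ _ _ hgt,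
          Polynomial.coeff_eq_zero_of_natDegree_lt (lt_of_le_of_lt hdeg' hgt), mul_zero,
          sub_zero]
      · rw [coeff_polyAct2_one_right w1 w2 (matU * matS) _ _ _ hle]
        have hterm : ∀ m1 ∈ Finset.range (w1 + 1),
            MvPolynomial.coeff (Finsupp.single 0 m1 + Finsupp.single 1 (d 1))
              (MvPolynomial.X 0 ^ w1 * toX2 P2 : MvPolynomial (Fin 2) ℚ) *
              (mfrac1 (matU * matS) m1 (w1 - m1)).coeff (d 0) =
            if m1 = w1 then P2.coeff (d 1) *
              (mfrac1 (matU * matS) m1 (w1 - m1)).coeff (d 0) else 0 := by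
          intro m1 _
          rw [hcP]
          by_cases h : m1 = w1
          · rw [if_pos h, if_pos h, one_mul]
          · rw [if_neg h, if_neg h, zero_mul, zero_mul]
        rw [Finset.sum_congr rfl hterm, Finset.sum_ite_eq' (Finset.range (w1+1)) w1,
          if_pos (Finset.mem_range.mpr (by omega)), mfrac1_US, Nat.sub_self, pow_zero,
          one_mul, Polynomial.coeff_X_pow]
        ring
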